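/- For p ≠ q with p,q ≥ 0 and p+q ≥ 1, the maximum degree of A_{p,q} equals 2·min{p,q}; for p = q ≥ 1, the maximum degree equals 2p−1. -/

import Mathlib

/-- Two words are related if one is obtained from the other by replacing one
occurrence of the subword `ab` (`a` = `false`, `b` = `true`) with `ba`. -/
def ARel (u v : List Bool) : Prop :=
  ∃ x y : List Bool,
    (u = x ++ false :: true :: y ∧ v = x ++ true :: false :: y) ∨
    (u = x ++ true :: false :: y ∧ v = x ++ false :: true :: y)

/-- The graph `A_{p,q}` whose vertices are the words with `p` letters `a`
(= `false`) and `q` letters `b` (= `true`), two words being adjacent if one is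
obtained from the other by changing one subword `ab` into `ba`. -/
def AGraph (p q : ℕ) : SimpleGraph {w : List Bool // w.count false = p ∧ w.count true = q} where
  Adj u v := ARel u.1 v.1
  symm := by
    constructor
    rintro u v ⟨x, y, ⟨h1, h2⟩ | ⟨h1, h2⟩⟩
    · exact ⟨x, y, Or.inr ⟨h2, h1⟩⟩
    · exact ⟨x, y, Or.inl ⟨h2, h1⟩⟩
  loopless := by
    constructor
    rintro u ⟨x, y, ⟨h1, h2⟩ | ⟨h1, h2⟩⟩ <;>
    · rw [h1] at h2
      have := List.append_cancel_left h2
      simp at this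


def alt : List Bool → ℕ
  | [] => 0
  | [_] => 0
  | a :: b :: t => (if a ≠ b then 1 else 0) + alt (b :: t)

def S (w : List Bool) : Finset ℕ :=
  (Finset.range (w.length - 1)).filter (fun i => w[i]? ≠ w[i+1]?)

lemma card_S : ∀ w : List Bool, (S w).card = alt w
  | [] => by simp [S, alt]
  | [a] => by simp [S, alt]
  | a :: b :: t => by
    have ih := card_S (b :: t)
    rw [S, Finset.card_filter] at ih ⊢
    simp only [List.length_cons] at ih ⊢
    rw [show t.length + 1 + 1 - 1 = t.length + 1 by omega, Finset.sum_range_succ',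
      show t.length + 1 - 1 = t.length by omega] at *
    simp only [List.getElem?_cons_succ, ne_eq, ite_not] at *
    rw [alt]
    simp only [List.getElem?_cons_zero, ne_eq, Option.some.injEq, ite_not]
    omega

lemma alt_le : ∀ (w : List Bool) (c : Bool),
    alt w + (if w.head? = some c then 1 else 0) ≤ 2 * w.count c
  | [], c => by simp [alt]
  | [a], c => by by_cases h : a = c <;> simp [alt, h, List.count_cons]
  | a :: b :: t, c => by
    have ih := alt_le (b :: t) c
    cases a <;> cases b <;> cases c <;>
      simp [alt, List.count_cons] at ih ⊢ <;> omega

lemma alt_le' (w : List Bool) (c : Bool) : alt w ≤ 2 * w.count c :=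
  le_trans (Nat.le_add_right _ _) (alt_le w c)

lemma alt_lt_length : ∀ w : List Bool, w ≠ [] → alt w + 1 ≤ w.length
  | [], h => absurd rfl h
  | [a], _ => by simp [alt]
  | a :: b :: t, _ => by
    have ih := alt_lt_length (b :: t) (by simp)
    simp only [alt, List.length_cons] at ih ⊢
    by_cases h : a = b <;> simp [h] <;> omega

def zig : ℕ → List Bool
  | 0 => []
  | n + 1 => false :: true :: zig n

lemma zig_count (n : ℕ) : (zig n).count false = n ∧ (zig n).count true = n := by
  induction n with
  | zero => simp [zig]
  | succ n ih => simp [zig, List.count_cons, ih.1, ih.2]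

lemma alt_true_zig : ∀ n, alt (true :: zig n) = 2 * n
  | 0 => rfl
  | n + 1 => by
    show alt (true :: false :: true :: zig n) = _
    rw [alt, alt, alt_true_zig n]
    simp; omega

lemma alt_zig (n : ℕ) : alt (zig (n + 1)) = 2 * (n + 1) - 1 := by
  show alt (false :: true :: zig n) = _
  rw [alt, alt_true_zig n]; simp; omega

def zag : ℕ → List Bool
  | 0 => []
  | n + 1 => true :: false :: zag n

lemma zag_count (n : ℕ) : (zag n).count false = n ∧ (zag n).count true = n := by
  induction n with
  | zero => simp [zag]
  | succ n ih => simp [zag, List.count_cons, ih.1, ih.2]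

lemma alt_false_zag : ∀ n, alt (false :: zag n) = 2 * n
  | 0 => rfl
  | n + 1 => by
    show alt (false :: true :: false :: zag n) = _
    rw [alt, alt, alt_false_zag n]
    simp; omega

lemma alt_repl_cons : ∀ (k : ℕ) (c : Bool) (w : List Bool),
    alt (List.replicate (k + 1) c ++ w) = alt (c :: w)
  | 0, c, w => rfl
  | k + 1, c, w => by
    have ih := alt_repl_cons k c w
    show alt (c :: (List.replicate (k+1) c ++ w)) = _
    rw [List.replicate_succ, List.cons_append] at ih ⊢
    rw [alt, ih]
    simp

lemma ARel_count {w v : List Bool} (h : ARel w v) (c : Bool) : v.count c = w.count c := by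
  obtain ⟨x, y, ⟨h1, h2⟩ | ⟨h1, h2⟩⟩ := h <;> subst h1 h2 <;>
    simp [List.count_append, List.count_cons] <;> omega

def swapAt (w : List Bool) (i : ℕ) : List Bool :=
  w.take i ++ (w[i+1]?.toList ++ (w[i]?.toList ++ w.drop (i + 2)))

lemma mem_S {w : List Bool} {i : ℕ} :
    i ∈ S w ↔ i + 1 < w.length ∧ w[i]? ≠ w[i+1]? := by
  rw [S, Finset.mem_filter, Finset.mem_range]
  constructor
  · rintro ⟨h1, h2⟩; exact ⟨by omega, h2⟩
  · rintro ⟨h1, h2⟩; exact ⟨by omega, h2⟩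

lemma swapAt_eq {w : List Bool} {i : ℕ} (h : i + 1 < w.length) :
    swapAt w i = w.take i ++ w[i+1] :: w[i] :: w.drop (i + 2) := by
  rw [swapAt, List.getElem?_eq_getElem h, List.getElem?_eq_getElem (by omega : i < w.length)]
  rfl

lemma w_decomp {w : List Bool} {i : ℕ} (h : i + 1 < w.length) :
    w = w.take i ++ w[i] :: w[i+1] :: w.drop (i + 2) := by
  conv_lhs => rw [← List.take_append_drop i w]
  congr 1
  rw [List.drop_eq_getElem_cons (by omega : i < w.length),
    List.drop_eq_getElem_cons (h)]

lemma ARel_swapAt {w : List Bool} {i : ℕ} (h1 : i + 1 < w.length)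
    (h2 : w[i]? ≠ w[i+1]?) : ARel w (swapAt w i) := by
  have hlt : i < w.length := by omega
  rw [List.getElem?_eq_getElem h1, List.getElem?_eq_getElem hlt] at h2
  refine ⟨w.take i, w.drop (i + 2), ?_⟩
  have hd := w_decomp h1
  have hs := swapAt_eq h1
  cases hi : w[i] <;> cases hj : w[i+1] <;> rw [hi, hj] at hd hs h2
  · simp at h2
  · exact Or.inl ⟨hd, hs⟩
  · exact Or.inr ⟨hd, hs⟩
  · simp at h2

lemma swapAt_getElem?_self {w : List Bool} {i : ℕ} (h : i + 1 < w.length) :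
    (swapAt w i)[i]? = w[i+1]? := by
  rw [swapAt_eq h, List.getElem?_append_right (by simp)]
  simp only [List.length_take]
  rw [show i - min i w.length = 0 by omega, List.getElem?_eq_getElem h]
  rfl

lemma swapAt_getElem?_lt {w : List Bool} {i j : ℕ} (h : i + 1 < w.length) (hj : j < i) :
    (swapAt w i)[j]? = w[j]? := by
  rw [swapAt_eq h, List.getElem?_append_left (by simp; omega), List.getElem?_take]
  simp [hj]

lemma getElem?_append_len (x r : List Bool) (k : ℕ) : (x ++ r)[x.length + k]? = r[k]? := by
  rw [List.getElem?_append_right (by omega)]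
  simp

lemma swapAt_append (x y : List Bool) (c d : Bool) :
    swapAt (x ++ c :: d :: y) x.length = x ++ d :: c :: y := by
  rw [swapAt]
  rw [show x.length + 1 = x.length + 1 from rfl, getElem?_append_len,
    show (x ++ c :: d :: y)[x.length]? = ((x ++ c :: d :: y))[x.length + 0]? by rw [Nat.add_zero],
    getElem?_append_len, List.take_left,
    show x.length + 2 = x.length + 2 from rfl,
    ← List.drop_drop, List.drop_left]
  simp

lemma ARel_to_swap {w v : List Bool} (h : ARel w v) :
    ∃ i, (i + 1 < w.length ∧ w[i]? ≠ w[i+1]?) ∧ v = swapAt w i := by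
  obtain ⟨x, y, ⟨h1, h2⟩ | ⟨h1, h2⟩⟩ := h <;> subst h1 <;> subst h2 <;>
    refine ⟨x.length, ⟨by simp, ?_⟩, (swapAt_append x y _ _).symm⟩ <;>
    · rw [show (x ++ _ :: _ :: y)[x.length]? = (x ++ _ :: _ :: y)[x.length + 0]? by
        rw [Nat.add_zero], getElem?_append_len, getElem?_append_len]
      simp

lemma swapAt_ne {w : List Bool} {i j : ℕ} (hi1 : i + 1 < w.length)
    (hi2 : w[i]? ≠ w[i+1]?) (hj1 : j + 1 < w.length) (hij : i < j) :
    swapAt w i ≠ swapAt w j := by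
  intro he
  apply hi2
  rw [← swapAt_getElem?_lt hj1 hij, ← he, swapAt_getElem?_self hi1]

noncomputable def nEquiv (w : List Bool) : {i // i ∈ S w} ≃ {v : List Bool // ARel w v} := by
  apply Equiv.ofBijective
    (fun i => ⟨swapAt w i.1, ARel_swapAt (mem_S.1 i.2).1 (mem_S.1 i.2).2⟩)
  constructor
  · rintro ⟨i, hi⟩ ⟨j, hj⟩ hij
    rw [mem_S] at hi hj
    have := congrArg Subtype.val hij
    simp only at this
    simp only [Subtype.mk.injEq]
    by_contra hne
    rcases Nat.lt_or_gt_of_ne hne with hlt | hgt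
    · exact swapAt_ne hi.1 hi.2 hj.1 hlt this
    · exact swapAt_ne hj.1 hj.2 hi.1 hgt this.symm
  · rintro ⟨v, hv⟩
    obtain ⟨i, hi, rfl⟩ := ARel_to_swap hv
    exact ⟨⟨i, mem_S.2 hi⟩, rfl⟩

lemma card_ARel (w : List Bool) : Nat.card {v : List Bool // ARel w v} = alt w := by
  rw [← Nat.card_congr (nEquiv w), Nat.card_eq_fintype_card, Fintype.card_coe, card_S]


lemma deg_eq (p q : ℕ) (u : {w : List Bool // w.count false = p ∧ w.count true = q}) :
    Nat.card ((AGraph p q).neighborSet u) = alt u.1 := by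
  rw [← card_ARel u.1]
  exact Nat.card_congr
    ⟨fun v => ⟨v.1.1, v.2⟩,
     fun v => ⟨⟨v.1, by rw [ARel_count v.2 false, ARel_count v.2 true]; exact u.2⟩, v.2⟩,
     fun v => rfl, fun v => rfl⟩

lemma count_len (w : List Bool) : w.count true + w.count false = w.length := by
  induction w with
  | nil => rfl
  | cons a t ih => cases a <;> simp [List.count_cons] <;> omega


/-- The maximum degree of `A_{p,q}` is `2 * min p q` when `p ≠ q` (with
`p + q ≥ 1`), and `2p - 1` when `p = q ≥ 1`. -/
theorem AGraph_max_degree (p q : ℕ) (h : 1 ≤ p + q) :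
    (p ≠ q →
      IsGreatest {d | ∃ v : {w : List Bool // w.count false = p ∧ w.count true = q},
        Nat.card ((AGraph p q).neighborSet v) = d} (2 * min p q)) ∧
    (p = q → 1 ≤ p →
      IsGreatest {d | ∃ v : {w : List Bool // w.count false = p ∧ w.count true = q},
        Nat.card ((AGraph p q).neighborSet v) = d} (2 * p - 1)) := by
  constructor
  · intro hpq
    constructor
    · rcases Nat.lt_or_gt_of_ne hpq with hlt | hgt
      · refine ⟨⟨List.replicate (q - p - 1 + 1) true ++ zig p, ?_⟩, ?_⟩
        · constructor <;>
            simp [List.count_append, List.count_replicate, (zig_count p).1,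
              (zig_count p).2] <;> omega
        · rw [deg_eq]
          show alt (List.replicate (q - p - 1 + 1) true ++ zig p) = _
          rw [alt_repl_cons, alt_true_zig]
          omega
      · refine ⟨⟨List.replicate (p - q - 1 + 1) false ++ zag q, ?_⟩, ?_⟩
        · constructor <;>
            simp [List.count_append, List.count_replicate, (zag_count q).1,
              (zag_count q).2] <;> omega
        · rw [deg_eq]
          show alt (List.replicate (p - q - 1 + 1) false ++ zag q) = _
          rw [alt_repl_cons, alt_false_zag]
          omega
    · rintro d ⟨v, rfl⟩
      rw [deg_eq]
      have h1 := alt_le' v.1 false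
      have h2 := alt_le' v.1 true
      rw [v.2.1] at h1
      rw [v.2.2] at h2
      omega
  · rintro rfl hp
    constructor
    · obtain ⟨k, rfl⟩ : ∃ k, p = k + 1 := ⟨p - 1, by omega⟩
      refine ⟨⟨zig (k + 1), (zig_count (k + 1)).1, (zig_count (k + 1)).2⟩, ?_⟩
      rw [deg_eq]
      exact alt_zig k
    · rintro d ⟨v, rfl⟩
      rw [deg_eq]
      have h1 := alt_lt_length v.1 (by
        intro hv
        have := v.2.1
        rw [hv] at this
        simp at this
        omega)
      have hl := count_len v.1
      rw [v.2.1, v.2.2] at hl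
      omega
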